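/- Let t be an indeterminate and X a variable. Set X' = 2(X-2)(X^2 + 2Xt - 1)(2X^2 - 2Xt - 2X + t)/(X(X-1)^2) and s = -2t^2 - 2 - X'/4 - 5t/2. Then Brumer's polynomial Bru(t,s;X) = X^5 + (t-3)X^4 - (t-s-3)X^3 + (t^2 - t - 2s - 1)X^2 + sX + t vanishes identically; equivalently, X(X-1)^2 · Bru(t, s; X) = 0 as an identity of rational functions in t and X. -/

import Mathlib

/-- The field `ℚ(t, X)` realized as `RatFunc (RatFunc ℚ)`,
with `t` the inner variable and `X` the outer variable. -/
noncomputable abbrev K2 : Type := RatFunc (RatFunc ℚ)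

noncomputable def tv : K2 := RatFunc.C RatFunc.X

noncomputable def Xv : K2 := RatFunc.X

/-- The isogeny formula `X' = 2(X-2)(X²+2Xt-1)(2X²-2Xt-2X+t)/(X(X-1)²)`. -/
noncomputable def Xp : K2 :=
  2 * (Xv - 2) * (Xv ^ 2 + 2 * Xv * tv - 1) * (2 * Xv ^ 2 - 2 * Xv * tv - 2 * Xv + tv) /
    (Xv * (Xv - 1) ^ 2)

/-- `s = -2t² - 2 - X'/4 - 5t/2`. -/
noncomputable def sv : K2 := -2 * tv ^ 2 - 2 - Xp / 4 - 5 / 2 * tv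

theorem RatFunc.X_sub_C_ne_zero {K : Type*} [Field K] (a : K) :
    (RatFunc.X : RatFunc K) - RatFunc.C a ≠ 0 := by
  rw [← RatFunc.algebraMap_X, ← RatFunc.algebraMap_C, ← map_sub]
  exact RatFunc.algebraMap_ne_zero (Polynomial.X_sub_C_ne_zero a)

theorem Xv_sub_one_ne_zero : Xv - 1 ≠ 0 := by
  simpa [Xv] using RatFunc.X_sub_C_ne_zero (1 : RatFunc ℚ)

theorem brumer_vanishes :
    Xv ^ 5 + (tv - 3) * Xv ^ 4 - (tv - sv - 3) * Xv ^ 3 +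
      (tv ^ 2 - tv - 2 * sv - 1) * Xv ^ 2 + sv * Xv + tv = 0 := by
  have hX : Xv ≠ 0 := RatFunc.X_ne_zero
  have hX1 : Xv - 1 ≠ 0 := Xv_sub_one_ne_zero
  rw [sv, Xp]
  field_simp
  ring
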